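/- Let t be a positive integer and let H = ⟨a, b | a^(3^(t+1)) = b^(3^(t+1)) = 1, b^(-1)ab = a^(1+3^t)⟩. Then the map sending a to a^(-1) and b to a^(-1)b extends to an automorphism of H. -/

import Mathlib

/-!
Sending `a ↦ a⁻¹`, `b ↦ a⁻¹b` respects the relations once `(a⁻¹b)^(3^(t+1)) = 1`. Since `t ≥ 1`,
`c = a^(3^t)` has order dividing 3 and is central, and `b a⁻¹ = a⁻¹ b c`; so
`(a⁻¹b)ⁿ = a⁻ⁿ bⁿ c^(n choose 2)`, and `3 ∣ (3^(t+1) choose 2)`. The resulting endomorphism is an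
involution, hence an automorphism.
-/

/-- Relations for the group `⟨a, b | a^(3^(t+1)) = b^(3^(t+1)) = 1, b⁻¹ab = a^(1+3^t)⟩`,
with generator `0` playing the role of `a` and `1` the role of `b`. -/
def hRels (t : ℕ) : Set (FreeGroup (Fin 2)) :=
  { FreeGroup.of 0 ^ 3 ^ (t + 1), FreeGroup.of 1 ^ 3 ^ (t + 1),
    (FreeGroup.of 1)⁻¹ * FreeGroup.of 0 * FreeGroup.of 1 *
      (FreeGroup.of 0 ^ (1 + 3 ^ t))⁻¹ }

section CentralCommutator

variable {G : Type*} [Group G] {x y z : G}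

theorem pow_mul_eq_mul_pow_mul_pow_of_mul_eq (h : y * x = x * y * z) (hzy : Commute z y)
    (n : ℕ) : y ^ n * x = x * y ^ n * z ^ n := by
  induction n with
  | zero => simp
  | succ n ih =>
    calc y ^ (n + 1) * x = y ^ n * (y * x) := by rw [pow_succ, mul_assoc]
      _ = y ^ n * x * y * z := by rw [h]; group
      _ = x * y ^ n * (z ^ n * y) * z := by rw [ih]; group
      _ = x * y ^ (n + 1) * z ^ (n + 1) := by rw [(hzy.pow_left n).eq]; group

theorem mul_pow_of_mul_eq (h : y * x = x * y * z) (hzx : Commute z x) (hzy : Commute z y)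
    (n : ℕ) : (x * y) ^ n = x ^ n * y ^ n * z ^ n.choose 2 := by
  induction n with
  | zero => simp
  | succ n ih =>
    calc (x * y) ^ (n + 1) = x ^ n * y ^ n * (z ^ n.choose 2 * (x * y)) := by
          rw [pow_succ, ih]; group
      _ = x ^ n * (y ^ n * x) * y * z ^ n.choose 2 := by
          rw [((hzx.mul_right hzy).pow_left _).eq]; group
      _ = x ^ n * x * y ^ n * (z ^ n * y) * z ^ n.choose 2 := by
          rw [pow_mul_eq_mul_pow_mul_pow_of_mul_eq h hzy]; group
      _ = x ^ (n + 1) * y ^ (n + 1) * z ^ (n + 1).choose 2 := by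
          rw [(hzy.pow_left n).eq, Nat.choose_succ_succ', Nat.choose_one_right]; group

end CentralCommutator

section MetacyclicRelations

variable {G : Type*} [Group G] {t : ℕ} {a b : G}

theorem commute_pow_three_pow (ht : 0 < t) (ha : a ^ 3 ^ (t + 1) = 1)
    (hab : b⁻¹ * a * b = a ^ (1 + 3 ^ t)) : Commute (a ^ 3 ^ t) b := by
  obtain ⟨k, hk⟩ : 3 ^ (t + 1) ∣ 3 ^ t * 3 ^ t := by
    rw [← pow_add]; exact pow_dvd_pow 3 (by omega)
  have hconj : b⁻¹ * a ^ 3 ^ t * b = a ^ 3 ^ t :=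
    calc b⁻¹ * a ^ 3 ^ t * b = (b⁻¹ * a * b⁻¹⁻¹) ^ 3 ^ t := by rw [conj_pow, inv_inv]
      _ = a ^ 3 ^ t * a ^ (3 ^ t * 3 ^ t) := by
          rw [inv_inv, hab, ← pow_mul, add_mul, one_mul, pow_add]
      _ = a ^ 3 ^ t := by rw [hk, pow_mul, ha, one_pow, mul_one]
  rwa [mul_assoc, inv_mul_eq_iff_eq_mul] at hconj

theorem inv_mul_pow_eq_one (ht : 0 < t) (ha : a ^ 3 ^ (t + 1) = 1) (hb : b ^ 3 ^ (t + 1) = 1)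
    (hab : b⁻¹ * a * b = a ^ (1 + 3 ^ t)) : (a⁻¹ * b) ^ 3 ^ (t + 1) = 1 := by
  set c := a ^ 3 ^ t with hc
  have hca : Commute c a⁻¹ := (Commute.pow_self a _).inv_right
  have hcb : Commute c b := commute_pow_three_pow ht ha hab
  have hc3 : c ^ 3 = 1 := by rw [hc, ← pow_mul, ← pow_succ, ha]
  have hcomm : b * a⁻¹ = a⁻¹ * b * c :=
    calc b * a⁻¹ = a⁻¹ * (b * (b⁻¹ * a * b)) * a⁻¹ := by group
      _ = a⁻¹ * b * (a * c * a⁻¹) := by rw [hab, pow_add, pow_one, ← hc]; group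
      _ = a⁻¹ * b * c := by rw [(Commute.self_pow a _).eq, mul_inv_cancel_right]
  obtain ⟨k, hk⟩ : 3 ∣ (3 ^ (t + 1)).choose 2 :=
    Nat.prime_three.dvd_choose_pow two_ne_zero (by have := Nat.le_self_pow t.succ_ne_zero 3; omega)
  rw [mul_pow_of_mul_eq hcomm hca hcb, hk, pow_mul, hc3, one_pow, inv_pow, ha, hb]
  group

end MetacyclicRelations

section Presentation

variable {t : ℕ}

theorem exists_hom_presentedGroup_hRels {G : Type*} [Group G] {a b : G}
    (ha : a ^ 3 ^ (t + 1) = 1) (hb : b ^ 3 ^ (t + 1) = 1) (hab : b⁻¹ * a * b = a ^ (1 + 3 ^ t)) :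
    ∃ f : PresentedGroup (hRels t) →* G, f (.of 0) = a ∧ f (.of 1) = b := by
  have hrels : ∀ r ∈ hRels t, FreeGroup.lift ![a, b] r = 1 := by
    rintro r (rfl | rfl | rfl) <;> simp [ha, hb, hab]
  exact ⟨PresentedGroup.toGroup hrels, PresentedGroup.toGroup.of hrels,
    PresentedGroup.toGroup.of hrels⟩

theorem hRels_of_zero_pow : (.of 0 : PresentedGroup (hRels t)) ^ 3 ^ (t + 1) = 1 :=
  PresentedGroup.one_of_mem (Set.mem_insert _ _)

theorem hRels_of_one_pow : (.of 1 : PresentedGroup (hRels t)) ^ 3 ^ (t + 1) = 1 :=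
  PresentedGroup.one_of_mem (Set.mem_insert_of_mem _ (Set.mem_insert _ _))

theorem hRels_of_one_conj_of_zero :
    (.of 1 : PresentedGroup (hRels t))⁻¹ * .of 0 * .of 1 = .of 0 ^ (1 + 3 ^ t) :=
  mul_inv_eq_one.mp <|
    PresentedGroup.one_of_mem (Set.mem_insert_of_mem _ (Set.mem_insert_of_mem _ rfl))

end Presentation

theorem stmt_11 (t : ℕ) (ht : 0 < t) :
    ∃ φ : PresentedGroup (hRels t) ≃* PresentedGroup (hRels t),
      φ (PresentedGroup.of 0) = (PresentedGroup.of 0 : PresentedGroup (hRels t))⁻¹ ∧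
      φ (PresentedGroup.of 1) =
        (PresentedGroup.of 0 : PresentedGroup (hRels t))⁻¹ * PresentedGroup.of 1 := by
  have ha := hRels_of_zero_pow (t := t)
  have hb := hRels_of_one_pow (t := t)
  have hab := hRels_of_one_conj_of_zero (t := t)
  obtain ⟨φ, hφa, hφb⟩ := exists_hom_presentedGroup_hRels
    (by rw [inv_pow, ha, inv_one]) (inv_mul_pow_eq_one ht ha hb hab)
    (by rw [inv_pow, ← hab]; group)
  have hφφ : φ.comp φ = .id _ :=
    PresentedGroup.ext fun i => by fin_cases i <;> simp [hφa, hφb]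
  exact ⟨φ.toMulEquiv φ hφφ hφφ, hφa, hφb⟩
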